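/- arXiv:1904.02272 — 4 statements merged into one kernel-verified Lean document; each statement's English description precedes it below -/
import Mathlib

section
/- Fix an integer n ≥ 1 and the Brunovsky pair (A, b). For real numbers s ≤ t, the controllability Gramian M(t,s) = ∫ₛᵗ exp((t−τ)A) b bᵀ exp((t−τ)Aᵀ) dτ has entries M(t,s)_{i,j} = (t−s)^{2n−i−j+1} / ((n−i)! (n−j)! (2n−i−j+1)) for all 1 ≤ i, j ≤ n. -/
open NormedSpace Matrix

attribute [local instance] Matrix.normedAddCommGroup Matrix.normedSpace

/-- The controllability Gramian `M(t,s) = ∫ₛᵗ exp((t−τ)A) b bᵀ exp((t−τ)Aᵀ) dτ`. -/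
noncomputable def controllabilityGramian {n : ℕ} (A : Matrix (Fin n) (Fin n) ℝ)
    (b : Fin n → ℝ) (t s : ℝ) : Matrix (Fin n) (Fin n) ℝ :=
  ∫ τ in s..t, exp ((t - τ) • A) * Matrix.vecMulVec b b * exp ((t - τ) • Aᵀ)

section Aux

variable {n : ℕ}

/-- Powers of the Brunovsky shift matrix. -/
lemma brunovsky_pow_apply (A : Matrix (Fin n) (Fin n) ℝ)
    (hA : ∀ i j : Fin n, A i j = if (j : ℕ) = (i : ℕ) + 1 then 1 else 0) :
    ∀ (k : ℕ) (i j : Fin n), (A ^ k) i j = if (j : ℕ) = (i : ℕ) + k then 1 else 0 := by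
  intro k
  induction k with
  | zero =>
    intro i j
    rw [pow_zero, Matrix.one_apply]
    by_cases h : i = j
    · subst h; simp
    · rw [if_neg h, if_neg (by simpa [Fin.ext_iff, eq_comm] using h)]
  | succ k ih =>
    intro i j
    rw [pow_succ, Matrix.mul_apply]
    by_cases hj : (j : ℕ) = (i : ℕ) + k + 1
    · have hik : (i : ℕ) + k < n := by omega
      rw [Finset.sum_eq_single (⟨(i : ℕ) + k, hik⟩ : Fin n)]
      · have hadd : (i : ℕ) + k + 1 = (i : ℕ) + (k + 1) := by omega
        rw [ih, hA]
        simp [hj, hadd]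
      · intro l _ hl
        rw [ih, if_neg (fun h => hl (Fin.ext h)), zero_mul]
      · simp
    · rw [Finset.sum_eq_zero, if_neg (by omega)]
      intro l _
      rw [ih, hA]
      by_cases h1 : (l : ℕ) = (i : ℕ) + k
      · rw [if_pos h1, one_mul, if_neg (by omega)]
      · rw [if_neg h1, zero_mul]

/-- Entries of the exponential of `u • A` for the Brunovsky shift `A`. -/
lemma brunovsky_exp_apply (A : Matrix (Fin n) (Fin n) ℝ)
    (hA : ∀ i j : Fin n, A i j = if (j : ℕ) = (i : ℕ) + 1 then 1 else 0)
    (u : ℝ) (i j : Fin n) :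
    exp (u • A) i j =
      if (i : ℕ) ≤ (j : ℕ) then
        u ^ ((j : ℕ) - (i : ℕ)) / (((j : ℕ) - (i : ℕ)).factorial : ℝ)
      else 0 := by
  have hpow := brunovsky_pow_apply A hA
  have hzero : ∀ k, n ≤ k → A ^ k = 0 := by
    intro k hk
    ext a b
    rw [hpow, Matrix.zero_apply, if_neg (by have := b.isLt; omega)]
  have hsum : exp (u • A) =
      ∑ k ∈ Finset.range n, ((k.factorial : ℝ))⁻¹ • (u ^ k • A ^ k) := by
    rw [exp_eq_tsum (𝕂 := ℝ)]
    have h1 : ∀ k : ℕ, ((k.factorial : ℝ))⁻¹ • (u • A) ^ k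
        = ((k.factorial : ℝ))⁻¹ • (u ^ k • A ^ k) := by
      intro k; rw [smul_pow]
    simp_rw [h1]
    refine tsum_eq_sum ?_
    intro k hk
    rw [hzero k (by simpa using hk)]
    simp
  rw [hsum]
  rw [Matrix.sum_apply]
  have hterm : ∀ k ∈ Finset.range n,
      (((k.factorial : ℝ))⁻¹ • (u ^ k • A ^ k)) i j
        = ((k.factorial : ℝ))⁻¹ * (u ^ k * (if (j : ℕ) = (i : ℕ) + k then 1 else 0)) := by
    intro k _
    rw [Matrix.smul_apply, Matrix.smul_apply, hpow]
    simp [smul_eq_mul]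
  rw [Finset.sum_congr rfl hterm]
  by_cases hij : (i : ℕ) ≤ (j : ℕ)
  · rw [if_pos hij]
    rw [Finset.sum_eq_single_of_mem ((j : ℕ) - (i : ℕ))
        (Finset.mem_range.2 (by have := j.isLt; omega))]
    · rw [if_pos (by omega), mul_one, div_eq_inv_mul]
    · intro k _ hk
      rw [if_neg (by omega), mul_zero, mul_zero]
  · rw [if_neg hij, Finset.sum_eq_zero]
    intro k _
    rw [if_neg (by omega), mul_zero, mul_zero]

/-- Entries of the Gramian integrand for the Brunovsky pair. -/
lemma brunovsky_integrand_apply (hn : 0 < n) (A : Matrix (Fin n) (Fin n) ℝ)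
    (hA : ∀ i j : Fin n, A i j = if (j : ℕ) = (i : ℕ) + 1 then 1 else 0)
    (b : Fin n → ℝ)
    (hb : ∀ i : Fin n, b i = if (i : ℕ) = n - 1 then 1 else 0)
    (u : ℝ) (i j : Fin n) :
    (exp (u • A) * Matrix.vecMulVec b b * exp (u • Aᵀ)) i j =
      (u ^ (n - 1 - (i : ℕ)) / ((n - 1 - (i : ℕ)).factorial : ℝ)) *
        (u ^ (n - 1 - (j : ℕ)) / ((n - 1 - (j : ℕ)).factorial : ℝ)) := by
  have ht : u • Aᵀ = (u • A)ᵀ := (Matrix.transpose_smul u A).symm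
  rw [ht, Matrix.exp_transpose]
  set M := exp (u • A) with hM
  have hlast : n - 1 < n := by omega
  have hb' : ∀ k : Fin n, b k = if k = (⟨n - 1, hlast⟩ : Fin n) then 1 else 0 := by
    intro k
    rw [hb]
    by_cases h : (k : ℕ) = n - 1
    · rw [if_pos h, if_pos (Fin.ext h)]
    · rw [if_neg h, if_neg (fun hh => h (by rw [hh]))]
  have key : (M * Matrix.vecMulVec b b * Mᵀ) i j
      = M i ⟨n - 1, hlast⟩ * M j ⟨n - 1, hlast⟩ := by
    simp only [Matrix.mul_apply, Matrix.transpose_apply, Matrix.vecMulVec_apply, hb',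
      mul_ite, mul_one, mul_zero, ite_mul, one_mul, zero_mul,
      Finset.sum_ite_eq, Finset.sum_ite_eq', Finset.mem_univ, if_true]
    rw [Finset.sum_eq_single (⟨n - 1, hlast⟩ : Fin n)]
    · simp
    · intro l _ hl
      simp [hl]
    · simp
  rw [key, hM, brunovsky_exp_apply A hA u i, brunovsky_exp_apply A hA u j]
  have hi' : (i : ℕ) ≤ n - 1 := by have := i.isLt; omega
  have hj' : (j : ℕ) ≤ n - 1 := by have := j.isLt; omega
  rw [if_pos hi', if_pos hj']

end Aux

/-- **Explicit entries of the controllability Gramian of the Brunovsky pair.**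
For the Brunovsky pair `(A, b)` in dimension `n ≥ 1` and real numbers `s ≤ t`,
the Gramian satisfies (with 1-based indices `i₁ = i+1`, `j₁ = j+1`)
`M(t,s)_{i₁,j₁} = (t−s)^{2n−i₁−j₁+1} / ((n−i₁)! (n−j₁)! (2n−i₁−j₁+1))`. -/
theorem brunovsky_gramian_entries
    (n : ℕ) (hn : 0 < n)
    (A : Matrix (Fin n) (Fin n) ℝ)
    (hA : ∀ i j : Fin n, A i j = if (j : ℕ) = (i : ℕ) + 1 then 1 else 0)
    (b : Fin n → ℝ)
    (hb : ∀ i : Fin n, b i = if (i : ℕ) = n - 1 then 1 else 0)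
    (s t : ℝ) (hst : s ≤ t) :
    ∀ i j : Fin n,
      controllabilityGramian A b t s i j =
        (t - s) ^ (2 * n - ((i : ℕ) + 1) - ((j : ℕ) + 1) + 1) /
          (((n - ((i : ℕ) + 1)).factorial : ℝ) * ((n - ((j : ℕ) + 1)).factorial : ℝ) *
            ((2 * n - ((i : ℕ) + 1) - ((j : ℕ) + 1) + 1 : ℕ) : ℝ)) := by
  intro i j
  have hi : (i : ℕ) < n := i.isLt
  have hj : (j : ℕ) < n := j.isLt
  set g : Fin n → ℝ → ℝ :=
    fun k τ => (t - τ) ^ (n - 1 - (k : ℕ)) / ((n - 1 - (k : ℕ)).factorial : ℝ) with hg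
  have hF : ∀ τ : ℝ, exp ((t - τ) • A) * Matrix.vecMulVec b b * exp ((t - τ) • Aᵀ)
      = Matrix.of fun p q : Fin n => g p τ * g q τ := by
    intro τ
    ext p q
    rw [brunovsky_integrand_apply hn A hA b hb (t - τ) p q]
    rfl
  have hcont : Continuous fun τ : ℝ => (Matrix.of fun p q : Fin n => g p τ * g q τ) := by
    apply continuous_matrix
    intro p q
    simp only [Matrix.of_apply, hg]
    fun_prop
  have hInt : @IntervalIntegrable (Matrix (Fin n) (Fin n) ℝ) _ NormedAddGroup.toENormedAddMonoid
      (fun τ : ℝ => (Matrix.of fun p q : Fin n => g p τ * g q τ))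
      MeasureTheory.volume s t := hcont.intervalIntegrable s t
  have hgram : controllabilityGramian A b t s
      = ∫ τ in s..t, (Matrix.of fun p q : Fin n => g p τ * g q τ) := by
    rw [controllabilityGramian]
    exact intervalIntegral.integral_congr fun τ _ => hF τ
  have hentry : (∫ τ in s..t, (Matrix.of fun p q : Fin n => g p τ * g q τ)) i j
      = ∫ τ in s..t, g i τ * g j τ := by
    let P1 : Matrix (Fin n) (Fin n) ℝ →L[ℝ] (Fin n → ℝ) := ContinuousLinearMap.proj i
    let P2 : (Fin n → ℝ) →L[ℝ] ℝ := ContinuousLinearMap.proj j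
    have h := ContinuousLinearMap.intervalIntegral_comp_comm (P2.comp P1) hInt
    exact h.symm
  rw [hgram, hentry]
  set a := n - 1 - (i : ℕ) with ha
  set c := n - 1 - (j : ℕ) with hc
  have e1 : n - ((i : ℕ) + 1) = a := by omega
  have e2 : n - ((j : ℕ) + 1) = c := by omega
  have e3 : 2 * n - ((i : ℕ) + 1) - ((j : ℕ) + 1) + 1 = a + c + 1 := by omega
  rw [e1, e2, e3]
  have hgg : ∀ τ : ℝ, g i τ * g j τ
      = ((a.factorial : ℝ) * (c.factorial : ℝ))⁻¹ * (t - τ) ^ (a + c) := by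
    intro τ
    rw [hg]
    simp only
    rw [div_mul_div_comm, ← pow_add, div_eq_inv_mul]
  simp_rw [hgg]
  rw [intervalIntegral.integral_const_mul]
  have hintpow : (∫ τ in s..t, (t - τ) ^ (a + c))
      = (t - s) ^ (a + c + 1) / ((a + c : ℕ) + 1 : ℝ) := by
    rw [intervalIntegral.integral_comp_sub_left (fun x => x ^ (a + c)) t]
    rw [integral_pow]
    simp
  rw [hintpow]
  have h1 : (a.factorial : ℝ) ≠ 0 := Nat.cast_ne_zero.2 a.factorial_ne_zero
  have h2 : (c.factorial : ℝ) ≠ 0 := Nat.cast_ne_zero.2 c.factorial_ne_zero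
  have h3 : ((a + c : ℕ) + 1 : ℝ) ≠ 0 := by positivity
  push_cast
  field_simp
end

section
/- Fix an integer n ≥ 1 and the Brunovsky pair (A, b). For all real numbers s < t, the controllability Gramian M(t,s) = ∫ₛᵗ exp((t−τ)A) b bᵀ exp((t−τ)Aᵀ) dτ is a symmetric positive definite n×n matrix (in particular M(t,s) is invertible). -/
open NormedSpace Matrix

attribute [local instance] Matrix.normedAddCommGroup Matrix.normedSpace

open MeasureTheory Polynomial in
open scoped Nat in
/-- **Positive definiteness of the controllability Gramian of the Brunovsky pair.**
For the Brunovsky pair `(A, b)` in dimension `n ≥ 1` and real numbers `s < t`, the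
controllability Gramian `M(t,s)` is a symmetric positive definite matrix; in
particular it is invertible. -/
theorem brunovsky_gramian_posdef
    (n : ℕ) (hn : 0 < n)
    (A : Matrix (Fin n) (Fin n) ℝ)
    (hA : ∀ i j : Fin n, A i j = if (j : ℕ) = (i : ℕ) + 1 then 1 else 0)
    (b : Fin n → ℝ)
    (hb : ∀ i : Fin n, b i = if (i : ℕ) = n - 1 then 1 else 0)
    (s t : ℝ) (hst : s < t) :
    (controllabilityGramian A b t s).IsSymm ∧
    (controllabilityGramian A b t s).PosDef ∧
    IsUnit (controllabilityGramian A b t s).det := by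
  classical
  -- ## Part 1: powers of `A`
  have key : ∀ (c : ℕ) (f : Fin n → ℝ),
      (∑ m : Fin n, (if (m : ℕ) = c then (1:ℝ) else 0) * f m)
        = if h : c < n then f ⟨c, h⟩ else 0 := by
    intro c f
    split_ifs with h
    · rw [Finset.sum_eq_single (⟨c, h⟩ : Fin n)]
      · simp
      · intro m _ hm
        have : (m : ℕ) ≠ c := fun hh => hm (Fin.ext hh)
        simp [this]
      · simp
    · apply Finset.sum_eq_zero
      intro m _
      have : (m : ℕ) ≠ c := by omega
      simp [this]
  have hApow : ∀ (k : ℕ) (i j : Fin n),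
      (A ^ k) i j = if (j : ℕ) = (i : ℕ) + k then 1 else 0 := by
    intro k
    induction k with
    | zero =>
      intro i j
      simp [Matrix.one_apply, Fin.ext_iff, eq_comm]
    | succ k ih =>
      intro i j
      rw [pow_succ, Matrix.mul_apply]
      have : ∀ m : Fin n, (A ^ k) i m * A m j
          = (if (m : ℕ) = (i : ℕ) + k then (1:ℝ) else 0)
            * (if (j : ℕ) = (m : ℕ) + 1 then 1 else 0) := by
        intro m; rw [ih, hA]
      rw [Finset.sum_congr rfl fun m _ => this m]
      rw [key ((i : ℕ) + k) (fun m => if (j : ℕ) = (m : ℕ) + 1 then (1:ℝ) else 0)]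
      simp only [Fin.val_mk]
      have hj := j.isLt
      split_ifs with h1 h2 h2 <;> first | rfl | omega
  have hAkb : ∀ k : ℕ, (A ^ k) *ᵥ b
      = fun i : Fin n => if (i : ℕ) + k = n - 1 then 1 else 0 := by
    intro k
    funext i
    show ∑ j : Fin n, (A ^ k) i j * b j = _
    have : ∀ j : Fin n, (A ^ k) i j * b j
        = (if (j : ℕ) = (i : ℕ) + k then (1:ℝ) else 0)
          * (if (j : ℕ) = n - 1 then 1 else 0) := by
      intro j; rw [hApow, hb]
    rw [Finset.sum_congr rfl fun j _ => this j,
      key ((i : ℕ) + k) (fun j => if (j : ℕ) = n - 1 then (1:ℝ) else 0)]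
    simp only [Fin.val_mk]
    have hi := i.isLt
    split_ifs with h1 h2 h2 <;> first | rfl | omega
  have hAzero : ∀ k : ℕ, n ≤ k → A ^ k = 0 := by
    intro k hk
    ext i j
    rw [hApow]
    have hj := j.isLt
    have : (j : ℕ) ≠ (i : ℕ) + k := by omega
    simp [this]
  -- ## Part 2: the matrix exponential as a finite sum
  have hexp : ∀ u : ℝ, exp (u • A)
      = ∑ k ∈ Finset.range n, ((k ! : ℝ)⁻¹ * u ^ k) • A ^ k := by
    intro u
    rw [exp_eq_tsum ℝ]; beta_reduce
    have h1 : ∀ k : ℕ, ((k ! : ℝ)⁻¹) • (u • A) ^ k = ((k ! : ℝ)⁻¹ * u ^ k) • A ^ k := by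
      intro k; rw [_root_.smul_pow, smul_smul]
    rw [tsum_congr h1]
    exact tsum_eq_sum (fun k hk => by
      rw [hAzero k (by simpa using hk), smul_zero])
  have hexpT : ∀ u : ℝ, exp (u • Aᵀ)
      = (∑ k ∈ Finset.range n, ((k ! : ℝ)⁻¹ * u ^ k) • A ^ k)ᵀ := by
    intro u
    rw [exp_eq_tsum ℝ]; beta_reduce
    have h1 : ∀ k : ℕ, ((k ! : ℝ)⁻¹) • (u • Aᵀ) ^ k
        = (((k ! : ℝ)⁻¹ * u ^ k) • A ^ k)ᵀ := by
      intro k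
      rw [_root_.smul_pow, smul_smul, ← Matrix.transpose_pow, ← Matrix.transpose_smul]
    rw [tsum_congr h1]
    rw [Matrix.transpose_sum]
    exact tsum_eq_sum (fun k hk => by
      rw [hAzero k (by simpa using hk), smul_zero, Matrix.transpose_zero])
  -- ## Part 3: algebraic identities for `vecMulVec`
  have hMBM : ∀ M : Matrix (Fin n) (Fin n) ℝ,
      M * vecMulVec b b * Mᵀ = vecMulVec (M *ᵥ b) (M *ᵥ b) := by
    intro M
    ext i j
    simp only [Matrix.mul_apply, Matrix.vecMulVec_apply, Matrix.transpose_apply,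
      Matrix.mulVec, dotProduct]
    rw [Finset.sum_mul_sum, Finset.sum_comm]
    refine Finset.sum_congr rfl fun q _ => ?_
    rw [Finset.sum_mul]
    exact Finset.sum_congr rfl fun p _ => by ring
  have hquad : ∀ (x u : Fin n → ℝ),
      x ⬝ᵥ (vecMulVec u u *ᵥ x) = (x ⬝ᵥ u) ^ 2 := by
    intro x u
    simp only [Matrix.mulVec, dotProduct, Matrix.vecMulVec_apply]
    rw [sq, Finset.sum_mul_sum]
    refine Finset.sum_congr rfl fun i _ => ?_
    rw [Finset.mul_sum]
    exact Finset.sum_congr rfl fun j _ => by ring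
  -- ## Part 4: `exp(uA) b` explicitly
  have hsum_mulVec : ∀ (F : ℕ → Matrix (Fin n) (Fin n) ℝ) (S : Finset ℕ),
      (∑ k ∈ S, F k) *ᵥ b = ∑ k ∈ S, (F k) *ᵥ b := by
    intro F S; funext i
    simp only [Matrix.mulVec, dotProduct, Finset.sum_apply, Matrix.sum_apply,
      Finset.sum_mul]
    exact Finset.sum_comm
  set W : ℝ → Fin n → ℝ :=
    fun τ i => (((n - 1 - (i : ℕ))! : ℝ)⁻¹ * (t - τ) ^ (n - 1 - (i : ℕ))) with hWdef
  have hW : ∀ u : ℝ, (∑ k ∈ Finset.range n, ((k ! : ℝ)⁻¹ * u ^ k) • A ^ k) *ᵥ b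
      = fun i : Fin n => (((n - 1 - (i : ℕ))! : ℝ)⁻¹ * u ^ (n - 1 - (i : ℕ))) := by
    intro u
    funext i
    have h2 : ∀ k ∈ Finset.range n, ((((k ! : ℝ)⁻¹ * u ^ k) • A ^ k) *ᵥ b) i
        = ((k ! : ℝ)⁻¹ * u ^ k) * (if (i : ℕ) + k = n - 1 then 1 else 0) := by
      intro k _
      rw [Matrix.smul_mulVec, hAkb k]
      simp
    rw [hsum_mulVec, Finset.sum_apply, Finset.sum_congr rfl h2,
      Finset.sum_eq_single (n - 1 - (i : ℕ))]
    · have hi := i.isLt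
      have : (i : ℕ) + (n - 1 - (i : ℕ)) = n - 1 := by omega
      simp [this]
    · intro k _ hk
      have : (i : ℕ) + k ≠ n - 1 := by omega
      simp [this]
    · intro hmem
      exfalso; apply hmem
      have hi := i.isLt
      exact Finset.mem_range.mpr (by omega)
  -- ## Part 5: the Gramian as an integral of `vecMulVec (W τ) (W τ)`
  have hgram : controllabilityGramian A b t s = ∫ τ in s..t, vecMulVec (W τ) (W τ) := by
    unfold controllabilityGramian
    refine intervalIntegral.integral_congr (fun τ _ => ?_)
    rw [hexp (t - τ), hexpT (t - τ), hMBM, hW (t - τ)]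
  have hWc : Continuous W := by
    rw [hWdef]
    exact continuous_pi fun i =>
      continuous_const.mul ((continuous_const.sub continuous_id).pow _)
  have hgcont : Continuous fun τ => vecMulVec (W τ) (W τ) := hWc.matrix_vecMulVec hWc
  have hgint : @IntervalIntegrable _ _ NormedAddCommGroup.toENormedAddCommMonoid.toENormedAddMonoid (fun τ => vecMulVec (W τ) (W τ)) volume s t :=
    hgcont.intervalIntegrable s t
  have hentry : ∀ i j : Fin n,
      (∫ τ in s..t, vecMulVec (W τ) (W τ)) i j = ∫ τ in s..t, W τ i * W τ j := by
    intro i j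
    let L : Matrix (Fin n) (Fin n) ℝ →ₗ[ℝ] ℝ :=
      { toFun := fun M => M i j
        map_add' := fun _ _ => rfl
        map_smul' := fun _ _ => rfl }
    have := (LinearMap.toContinuousLinearMap L).intervalIntegral_comp_comm hgint
    exact this.symm
  -- ## Part 6: symmetry
  have hsymm : (controllabilityGramian A b t s).IsSymm := by
    show (controllabilityGramian A b t s)ᵀ = _
    ext i j
    rw [Matrix.transpose_apply, hgram, hentry i j, hentry j i]
    simp_rw [mul_comm]
  -- ## Part 7: positive definiteness
  have hpd : (controllabilityGramian A b t s).PosDef := by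
    rw [Matrix.posDef_iff_dotProduct_mulVec]
    constructor
    · show (controllabilityGramian A b t s)ᴴ = _
      ext i j
      rw [Matrix.conjTranspose_apply, star_trivial]
      exact congrFun (congrFun hsymm i) j
    · intro x hx
      have hstar : star x = x := star_trivial x
      rw [hstar, hgram]
      -- reduce to a scalar integral
      have hquadint : x ⬝ᵥ ((∫ τ in s..t, vecMulVec (W τ) (W τ)) *ᵥ x)
          = ∫ τ in s..t, x ⬝ᵥ (vecMulVec (W τ) (W τ) *ᵥ x) := by
        let Q : Matrix (Fin n) (Fin n) ℝ →ₗ[ℝ] ℝ :=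
          { toFun := fun M => x ⬝ᵥ (M *ᵥ x)
            map_add' := fun M N => by
              show x ⬝ᵥ ((M + N) *ᵥ x) = x ⬝ᵥ (M *ᵥ x) + x ⬝ᵥ (N *ᵥ x); rw [Matrix.add_mulVec, dotProduct_add]
            map_smul' := fun c M => by
              simp only [RingHom.id_apply, smul_eq_mul]
              rw [Matrix.smul_mulVec, dotProduct_smul, smul_eq_mul] }
        have := (LinearMap.toContinuousLinearMap Q).intervalIntegral_comp_comm hgint
        exact this.symm
      rw [hquadint]
      -- the scalar integrand is the square of a polynomial evaluation
      set p : ℝ[X] := ∑ i : Fin n,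
        Polynomial.monomial (n - 1 - (i : ℕ)) (x i * ((n - 1 - (i : ℕ))! : ℝ)⁻¹) with hp
      have hpeval : ∀ τ : ℝ, p.eval (t - τ) = x ⬝ᵥ W τ := by
        intro τ
        rw [hp, Polynomial.eval_finset_sum]
        simp only [Polynomial.eval_monomial, dotProduct, hWdef]
        exact Finset.sum_congr rfl fun i _ => by ring
      have hp0 : p ≠ 0 := by
        obtain ⟨i0, hi0⟩ := Function.ne_iff.mp hx
        simp only [Pi.zero_apply] at hi0
        have hcoeff : p.coeff (n - 1 - (i0 : ℕ)) = x i0 * ((n - 1 - (i0 : ℕ))! : ℝ)⁻¹ := by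
          rw [hp, Polynomial.finset_sum_coeff]
          rw [Finset.sum_eq_single i0]
          · rw [Polynomial.coeff_monomial, if_pos rfl]
          · intro i _ hi
            rw [Polynomial.coeff_monomial, if_neg]
            have h1 := i.isLt; have h2 := i0.isLt
            intro hh
            exact hi (Fin.ext (by omega))
          · simp
        intro h
        rw [h, Polynomial.coeff_zero] at hcoeff
        exact (mul_ne_zero hi0 (by simp [Nat.factorial_ne_zero])) hcoeff.symm
      have hint_eq : ∀ τ : ℝ, x ⬝ᵥ (vecMulVec (W τ) (W τ) *ᵥ x)
          = (p.eval (t - τ)) ^ 2 := by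
        intro τ
        rw [hquad, hpeval]
      rw [intervalIntegral.integral_congr (fun τ _ => hint_eq τ)]
      -- positivity of the integral of the square of a nonzero polynomial
      set f : ℝ → ℝ := fun τ => p.eval (t - τ) with hf
      have hfc : Continuous f := p.continuous.comp (continuous_const.sub continuous_id)
      rw [intervalIntegral.integral_pos_iff_support_of_nonneg_ae
        (Filter.Eventually.of_forall fun τ => sq_nonneg (f τ))
        ((hfc.pow 2).intervalIntegrable s t)]
      refine ⟨hst, ?_⟩
      set Z : Set ℝ := (fun τ => t - τ) ⁻¹' {r : ℝ | p.IsRoot r} with hZ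
      have hZfin : Z.Finite := by
        apply Set.Finite.preimage _ (Polynomial.finite_setOf_isRoot hp0)
        intro a _ c _ h
        dsimp at h; linarith
      have hsubset : Set.Ioc s t \ Z ⊆ Function.support (fun τ => f τ ^ 2) ∩ Set.Ioc s t := by
        rintro τ ⟨hτ1, hτ2⟩
        refine ⟨?_, hτ1⟩
        simp only [Function.mem_support]
        intro hcon
        exact hτ2 (sq_eq_zero_iff.mp hcon)
      calc (0 : ENNReal) < volume (Set.Ioc s t \ Z) := by
            rw [measure_diff_null (hZfin.measure_zero _), Real.volume_Ioc]
            exact ENNReal.ofReal_pos.mpr (by linarith)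
        _ ≤ volume (Function.support (fun τ => f τ ^ 2) ∩ Set.Ioc s t) :=
            measure_mono hsubset
  exact ⟨hsymm, hpd, isUnit_iff_ne_zero.mpr hpd.det_pos.ne'⟩
end

section
/- Let n be a positive integer and let S and H be real symmetric n×n matrices such that S and I − S are positive semidefinite (0 ⪯ S ⪯ I) and H is positive definite. Let S^{1/2} denote the positive semidefinite square root of S. Then: (i) the matrix (I − S) + S^{1/2} H S^{1/2} is positive definite; (ii) every real eigenvalue of the symmetric matrix S^{1/2}(H − I)S^{1/2} is strictly greater than −1; (iii) det(I + S^{1/2}(H − I)S^{1/2}) > 0. -/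
open Matrix

open scoped ComplexOrder in
/-- The positive semidefinite square root of a positive semidefinite matrix
(definition of `Matrix.PosSemidef.sqrt` from the Mathlib of December 2024, removed since). -/
noncomputable def Matrix.PosSemidef.sqrt {n 𝕜 : Type*} [Fintype n] [RCLike 𝕜] [DecidableEq n]
    {A : Matrix n n 𝕜} (hA : A.PosSemidef) : Matrix n n 𝕜 :=
  (hA.1.eigenvectorUnitary : Matrix n n 𝕜) *
    Matrix.diagonal ((↑) ∘ (Real.sqrt ∘ hA.1.eigenvalues)) *
    (star (hA.1.eigenvectorUnitary : Matrix n n 𝕜))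

lemma sqrt_posSemidef' {n : ℕ} {S : Matrix (Fin n) (Fin n) ℝ} (hS : S.PosSemidef) :
    hS.sqrt.PosSemidef := by
  unfold Matrix.PosSemidef.sqrt
  have hU : star (hS.1.eigenvectorUnitary : Matrix (Fin n) (Fin n) ℝ)
      = (hS.1.eigenvectorUnitary : Matrix (Fin n) (Fin n) ℝ)ᴴ := rfl
  rw [hU]
  exact (PosSemidef.diagonal (fun i => by simp [Real.sqrt_nonneg])).mul_mul_conjTranspose_same _

lemma sqrt_mul_self' {n : ℕ} {S : Matrix (Fin n) (Fin n) ℝ} (hS : S.PosSemidef) :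
    hS.sqrt * hS.sqrt = S := by
  unfold Matrix.PosSemidef.sqrt
  set U : Matrix (Fin n) (Fin n) ℝ := (hS.1.eigenvectorUnitary : Matrix (Fin n) (Fin n) ℝ) with hUdef
  have hUU : star U * U = 1 := Unitary.coe_star_mul_self _
  set D : Matrix (Fin n) (Fin n) ℝ := Matrix.diagonal (RCLike.ofReal ∘ Real.sqrt ∘ hS.1.eigenvalues) with hD
  rw [show U * D * star U * (U * D * star U) = U * D * (star U * U) * D * star U by
    simp only [mul_assoc]]
  rw [hUU, mul_one, mul_assoc U D D, hD, diagonal_mul_diagonal]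
  conv_rhs => rw [hS.1.spectral_theorem]
  rw [Unitary.conjStarAlgAut_apply]
  congr 2
  congr 1
  funext i
  simp [Real.mul_self_sqrt (hS.eigenvalues_nonneg i)]

lemma smul_one_posSemidef {n : ℕ} {c : ℝ} (hc : 0 ≤ c) :
    (c • (1 : Matrix (Fin n) (Fin n) ℝ)).PosSemidef := by
  refine Matrix.PosSemidef.of_dotProduct_mulVec_nonneg ?_ ?_
  · simp [Matrix.IsHermitian]
  · intro x
    simp only [smul_mulVec, one_mulVec, dotProduct_smul, smul_eq_mul]
    exact mul_nonneg hc (dotProduct_star_self_nonneg x)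

/-- **Spectral facts used for existence of the characteristic map.**
Let `S, H` be real symmetric `n×n` matrices with `0 ⪯ S ⪯ I` and `H ≻ 0`, and let
`S^{1/2}` be the positive semidefinite square root of `S`. Then
(i) `(I − S) + S^{1/2} H S^{1/2}` is positive definite;
(ii) every real eigenvalue of `S^{1/2}(H − I)S^{1/2}` is strictly greater than `−1`;
(iii) `det(I + S^{1/2}(H − I)S^{1/2}) > 0`. -/
theorem sqrt_conjugation_posdef
    (n : ℕ)
    (S H : Matrix (Fin n) (Fin n) ℝ)
    (hS : S.PosSemidef)
    (hIS : (1 - S).PosSemidef)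
    (hH : H.PosDef) :
    ((1 - S) + hS.sqrt * H * hS.sqrt).PosDef ∧
    (∀ μ : ℝ, μ ∈ spectrum ℝ (hS.sqrt * (H - 1) * hS.sqrt) → -1 < μ) ∧
    0 < (1 + hS.sqrt * (H - 1) * hS.sqrt).det := by
  set M := hS.sqrt with hM
  have hMps : M.PosSemidef := sqrt_posSemidef' hS
  have hMH : Mᴴ = M := hMps.1
  have hMM : M * M = S := sqrt_mul_self' hS
  -- part (i)
  have hi : ((1 - S) + M * H * M).PosDef := by
    refine Matrix.PosDef.of_dotProduct_mulVec_pos ?_ ?_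
    · refine hIS.1.add ?_
      have := Matrix.isHermitian_conjTranspose_mul_mul M hH.1
      rwa [hMH] at this
    · intro x hx
      have key : star x ⬝ᵥ ((1 - S) + M * H * M) *ᵥ x
          = star x ⬝ᵥ (1 - S) *ᵥ x + star (M *ᵥ x) ⬝ᵥ H *ᵥ (M *ᵥ x) := by
        rw [add_mulVec, dotProduct_add]
        congr 1
        simp only [star_mulVec, dotProduct_mulVec, vecMul_vecMul, mulVec_mulVec, hMH, mul_assoc]
      rw [key]
      by_cases hMx : M *ᵥ x = 0
      · have hSx : S *ᵥ x = 0 := by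
          rw [← hMM, ← mulVec_mulVec, hMx, mulVec_zero]
        have : star x ⬝ᵥ (1 - S) *ᵥ x = star x ⬝ᵥ x := by
          rw [sub_mulVec, one_mulVec, hSx, sub_zero]
        rw [this, hMx, mulVec_zero, dotProduct_zero, add_zero]
        exact Matrix.dotProduct_star_self_pos_iff.mpr hx
      · exact add_pos_of_nonneg_of_pos (hIS.dotProduct_mulVec_nonneg x) (hH.dotProduct_mulVec_pos hMx)
  have hEq : 1 + M * (H - 1) * M = (1 - S) + M * H * M := by
    rw [mul_sub, sub_mul, mul_one, hMM]
    abel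
  have hi' : (1 + M * (H - 1) * M).PosDef := hEq ▸ hi
  refine ⟨hi, ?_, hEq ▸ hi.det_pos⟩
  intro μ hμ
  by_contra hle
  push_neg at hle
  -- show μ • 1 - A is a unit, contradiction
  have hpd : (1 + M * (H - 1) * M + (-(1 + μ)) • (1 : Matrix (Fin n) (Fin n) ℝ)).PosDef :=
    hi'.add_posSemidef (smul_one_posSemidef (by linarith))
  have hEq2 : 1 + M * (H - 1) * M + (-(1 + μ)) • (1 : Matrix (Fin n) (Fin n) ℝ)
      = -(algebraMap ℝ (Matrix (Fin n) (Fin n) ℝ) μ - M * (H - 1) * M) := by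
    rw [Algebra.algebraMap_eq_smul_one]
    rw [neg_sub]
    module
  rw [hEq2] at hpd
  have hunit : IsUnit (algebraMap ℝ (Matrix (Fin n) (Fin n) ℝ) μ - M * (H - 1) * M) := by
    have := hpd.det_pos.ne'
    have := (Matrix.isUnit_iff_isUnit_det _).mpr (isUnit_iff_ne_zero.mpr this)
    simpa using this.neg
  exact (spectrum.mem_iff.mp hμ) hunit
end

section
/- Let n be a positive integer, let S be a real symmetric n×n matrix with S and I − S positive semidefinite (0 ⪯ S ⪯ I), and let T : ℝⁿ → ℝⁿ be strictly monotone, i.e., ⟨T(x) − T(y), x − y⟩ > 0 for all x ≠ y. Then the map F : ℝⁿ → ℝⁿ defined by F(r) = (I − S) r + S T(r) is injective. (This yields the uniqueness of the solution of the characteristic-based equation in the density steering problem, where T is the gradient of a convex potential with positive definite Hessian and S(t) is the matrix interpolating between 0 at t = 0 and I at t = 1.) -/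
open Matrix


/-- **Injectivity of the interpolating map (uniqueness in the characteristic equation).**
Let `S` be a real symmetric `n×n` matrix with `0 ⪯ S ⪯ I`, and let `T : ℝⁿ → ℝⁿ` be
strictly monotone: `⟨T(x) − T(y), x − y⟩ > 0` whenever `x ≠ y`. Then the map
`F(r) = (I − S) r + S T(r)` is injective. -/
theorem injective_interpolating_map
    (n : ℕ)
    (S : Matrix (Fin n) (Fin n) ℝ)
    (hS : S.PosSemidef)
    (hIS : (1 - S).PosSemidef)
    (T : (Fin n → ℝ) → (Fin n → ℝ))
    (hT : ∀ x y : Fin n → ℝ, x ≠ y → 0 < ∑ i, (T x i - T y i) * (x i - y i))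
    (F : (Fin n → ℝ) → (Fin n → ℝ))
    (hF : ∀ r, F r = (1 - S).mulVec r + S.mulVec (T r)) :
    Function.Injective F := by
  intro x y hxy
  by_contra hne
  set u : Fin n → ℝ := x - y with hu
  set v : Fin n → ℝ := T x - T y with hv
  have hpos : 0 < v ⬝ᵥ u := by
    have := hT x y hne
    simpa [dotProduct, hu, hv, Pi.sub_apply] using this
  have heq : (1 - S).mulVec u + S.mulVec v = 0 := by
    have h1 := hF x
    have h2 := hF y
    have : (1 - S).mulVec x + S.mulVec (T x) = (1 - S).mulVec y + S.mulVec (T y) := by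
      rw [← h1, ← h2, hxy]
    have h3 : (1 - S).mulVec (x - y) + S.mulVec (T x - T y) = 0 := by
      simp only [Matrix.mulVec_sub]
      abel_nf
      abel_nf at this
      linear_combination (norm := abel) this
    simpa [hu, hv] using h3
  have hSv : S.mulVec v = -((1 - S).mulVec u) := by
    linear_combination (norm := abel) heq
  -- nonnegativity facts
  have hq1 : 0 ≤ v ⬝ᵥ S.mulVec v := by
    have := hS.re_dotProduct_nonneg v
    simpa [dotProduct, star] using this
  have hq2 : 0 ≤ u ⬝ᵥ (1 - S).mulVec u := by
    have := hIS.re_dotProduct_nonneg u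
    simpa [dotProduct, star] using this
  -- decompose ⟨v, u⟩
  have hdecomp : v ⬝ᵥ u = v ⬝ᵥ (1 - S).mulVec u + v ⬝ᵥ S.mulVec u := by
    rw [← dotProduct_add, ← Matrix.add_mulVec, sub_add_cancel, Matrix.one_mulVec]
  have ht1 : v ⬝ᵥ (1 - S).mulVec u = -(v ⬝ᵥ S.mulVec v) := by
    have : (1 - S).mulVec u = -(S.mulVec v) := by
      linear_combination (norm := abel) heq
    rw [this, dotProduct_neg]
  have ht2 : v ⬝ᵥ S.mulVec u = -(u ⬝ᵥ (1 - S).mulVec u) := by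
    have hsym : v ⬝ᵥ S.mulVec u = S.mulVec v ⬝ᵥ u := by
      have hSt : Sᵀ = S := by
        ext i j; have := congrFun (congrFun hS.1.eq i) j; simpa using this
      rw [Matrix.dotProduct_mulVec, ← Matrix.mulVec_transpose, hSt]
    rw [hsym, hSv, neg_dotProduct, dotProduct_comm]
  rw [hdecomp, ht1, ht2] at hpos
  linarith
end
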